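/- arXiv:2304.01258 — 2 statements merged into one kernel-verified Lean document; each statement's English description precedes it below -/
import Mathlib

section
/- Let k be a field of characteristic zero and let R = k[x_{ij} : 0 ≤ i < j ≤ 4] be the polynomial ring in 10 variables. For each m ∈ {0,1,2,3,4}, let a < b < c < d be the elements of {0,1,2,3,4} \ {m} and set q_m = x_{ab} x_{cd} − x_{ac} x_{bd} + x_{ad} x_{bc}. Let I = (q_0, …, q_4) and S = R/I, graded by total degree. Then for every natural number n, the k-dimension of the degree-n homogeneous component of S (the image in S of the homogeneous polynomials of degree n) equals (n+1)(n+2)²(n+3)²(n+4)/144. -/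
open MvPolynomial

/-- Index type for the 10 variables `x_{ij}`, `0 ≤ i < j ≤ 4`. -/
abbrev PlueckerIdx : Type := {p : Fin 5 × Fin 5 // p.1 < p.2}

variable (k : Type*) [Field k] [CharZero k]

/-- The variable `x_{ij}` for `i < j`. -/
noncomputable def xv (i j : Fin 5) (h : i < j) : MvPolynomial PlueckerIdx k :=
  MvPolynomial.X ⟨(i, j), h⟩

/-- The Pfaffian quadric `q_m` obtained by omitting the index `m`:
`q_m = x_{ab} x_{cd} − x_{ac} x_{bd} + x_{ad} x_{bc}` where
`a < b < c < d` are the elements of `{0,1,2,3,4} \ {m}`. -/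
noncomputable def pfaffian : Fin 5 → MvPolynomial PlueckerIdx k
  | 0 => xv k 1 2 (by decide) * xv k 3 4 (by decide)
       - xv k 1 3 (by decide) * xv k 2 4 (by decide)
       + xv k 1 4 (by decide) * xv k 2 3 (by decide)
  | 1 => xv k 0 2 (by decide) * xv k 3 4 (by decide)
       - xv k 0 3 (by decide) * xv k 2 4 (by decide)
       + xv k 0 4 (by decide) * xv k 2 3 (by decide)
  | 2 => xv k 0 1 (by decide) * xv k 3 4 (by decide)
       - xv k 0 3 (by decide) * xv k 1 4 (by decide)
       + xv k 0 4 (by decide) * xv k 1 3 (by decide)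
  | 3 => xv k 0 1 (by decide) * xv k 2 4 (by decide)
       - xv k 0 2 (by decide) * xv k 1 4 (by decide)
       + xv k 0 4 (by decide) * xv k 1 2 (by decide)
  | 4 => xv k 0 1 (by decide) * xv k 2 3 (by decide)
       - xv k 0 2 (by decide) * xv k 1 3 (by decide)
       + xv k 0 3 (by decide) * xv k 1 2 (by decide)

/-- The ideal `I = (q_0, …, q_4)`. -/
noncomputable def plueckerIdeal : Ideal (MvPolynomial PlueckerIdx k) :=
  Ideal.span (Set.range (pfaffian k))

/-- The `k`-dimension of the degree-`n` homogeneous component of `S = R/I`,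
i.e. of the image in `S` of the homogeneous polynomials of degree `n`. -/
noncomputable def plueckerDim (n : ℕ) : ℕ :=
  Module.finrank k
    ((MvPolynomial.homogeneousSubmodule PlueckerIdx k n).map
      (Ideal.Quotient.mkₐ k (plueckerIdeal k)).toLinearMap)

/-!
The monomials `x_{p₁} ⋯ x_{pₙ}` whose indices form a chain `p₁ ≤ ⋯ ≤ pₙ` for the componentwise
order on pairs are a basis of the degree-`n` part of `S`.

They span: a monomial that is not a chain contains a nested pair `x_{ad} x_{bc}` with
`a < b < c < d`, and the Plücker relation replaces it by `x_{ac} x_{bd} - x_{ab} x_{cd}`, which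
lowers `∑ (j - i)²`.

They are independent: sending `x_{ij}` to the `2 × 2` minor `y_i z_j - y_j z_i` of a generic
`2 × 5` matrix kills `I`, and the lexicographic leading monomial `∏ y_{iₖ} z_{jₖ}` of the image of
a chain monomial determines the chain, since a chain is recovered from its two projections.

Removing the largest element of a chain gives a recursion for the number of chains of length `n`
below each index, which is solved by explicit polynomials in `n`.
-/

namespace MonomialOrder

variable {σ R : Type*} [CommRing R] [NoZeroDivisors R] (m : MonomialOrder σ)

theorem degree_multiset_prod {s : Multiset (MvPolynomial σ R)} (hs : ∀ f ∈ s, f ≠ 0) :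
    m.degree s.prod = (s.map m.degree).sum := by
  nontriviality R
  induction s using Multiset.induction with
  | empty => simp
  | cons f s ih =>
    have hs' : ∀ g ∈ s, g ≠ 0 := fun g hg => hs g (Multiset.mem_cons_of_mem hg)
    rw [Multiset.prod_cons, Multiset.map_cons, Multiset.sum_cons,
      m.degree_mul (hs f (Multiset.mem_cons_self f s)) (Multiset.prod_ne_zero fun h => hs' 0 h rfl),
      ih hs']

theorem linearIndependent_of_injective_degree {ι : Type*} {f : ι → MvPolynomial σ R}
    (hf : ∀ i, f i ≠ 0) (hinj : Function.Injective (m.degree ∘ f)) :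
    LinearIndependent R f := by
  classical
  rw [linearIndependent_iff']
  intro s g hsum
  by_contra! hne
  obtain ⟨i₀, hi₀s, hi₀⟩ := hne
  obtain ⟨i, hit, hmax⟩ := (s.filter (g · ≠ 0)).exists_max_image (m.toSyn ∘ m.degree ∘ f)
    ⟨i₀, Finset.mem_filter.2 ⟨hi₀s, hi₀⟩⟩
  rw [Finset.mem_filter] at hit
  have hcoeff : coeff (m.degree (f i)) (∑ j ∈ s, g j • f j) = g i * m.leadingCoeff (f i) := by
    rw [coeff_sum, Finset.sum_eq_single_of_mem i hit.1]
    · rw [coeff_smul, smul_eq_mul, leadingCoeff]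
    · intro j hj hji
      by_cases hgj : g j = 0
      · rw [hgj, zero_smul, coeff_zero]
      have hlt : m.degree (f j) ≺[m] m.degree (f i) :=
        lt_of_le_of_ne (hmax j (Finset.mem_filter.2 ⟨hj, hgj⟩))
          fun h => hji (hinj (m.toSyn.injective h))
      rw [coeff_smul, m.coeff_eq_zero_of_lt hlt, smul_zero]
  rw [hsum, coeff_zero] at hcoeff
  exact mul_ne_zero hit.2 (m.leadingCoeff_ne_zero_iff.2 (hf i)) hcoeff.symm

end MonomialOrder

theorem MvPolynomial.monomial_one_eq_prod_toMultiset {σ R : Type*} [CommSemiring R]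
    (d : σ →₀ ℕ) : monomial d (1 : R) = (d.toMultiset.map X).prod := by
  rw [Finsupp.toMultiset_map, Finsupp.prod_toMultiset, Finsupp.prod_mapDomain_index, monomial_eq,
    C_1, one_mul] <;> simp [pow_add]

theorem MvPolynomial.isHomogeneous_multiset_prod_X {σ R : Type*} [CommSemiring R] (s : Multiset σ) :
    ((s.map X).prod : MvPolynomial σ R).IsHomogeneous (Multiset.card s) := by
  induction s using Multiset.induction with
  | empty => simpa using isHomogeneous_one σ R
  | cons a s ih => simpa [add_comm] using (isHomogeneous_X R a).mul ih

section Chains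

variable {α : Type*} [PartialOrder α]

theorem Multiset.exists_forall_le_of_isChain {s : Multiset α} (hs : s ≠ 0)
    (hc : IsChain (· ≤ ·) {a | a ∈ s}) : ∃ a ∈ s, ∀ b ∈ s, b ≤ a := by
  classical
  obtain ⟨a, ha⟩ := s.toFinset.exists_maximal (Multiset.toFinset_nonempty.2 hs)
  have has : a ∈ s := Multiset.mem_toFinset.1 ha.1
  exact ⟨a, has, fun b hb => (hc.total hb has).elim id
    fun hab => ha.2 (Multiset.mem_toFinset.2 hb) hab⟩

theorem Multiset.apply_le_of_map_eq {γ : Type*} [Preorder γ] {f : α → γ} (hf : Monotone f)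
    {s t : Multiset α} (h : s.map f = t.map f) {a b : α} (ha : ∀ x ∈ s, x ≤ a) (hb : b ∈ t) :
    f b ≤ f a := by
  obtain ⟨x, hx, hxb⟩ := Multiset.mem_map.1 (h ▸ Multiset.mem_map_of_mem f hb)
  exact hxb ▸ hf (ha x hx)

theorem Multiset.eq_of_isChain_of_map_fst_eq_of_map_snd_eq {β : Type*} [PartialOrder β] :
    ∀ {s t : Multiset (α × β)}, IsChain (· ≤ ·) {x | x ∈ s} → IsChain (· ≤ ·) {x | x ∈ t} →
      s.map Prod.fst = t.map Prod.fst → s.map Prod.snd = t.map Prod.snd → s = t := by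
  classical
  intro s
  induction hn : Multiset.card s generalizing s with
  | zero =>
    intro t _ _ h₁ _
    rw [Multiset.card_eq_zero.1 hn, Multiset.map_zero, eq_comm, Multiset.map_eq_zero] at h₁
    rw [Multiset.card_eq_zero.1 hn, h₁]
  | succ n ih =>
    intro t hs ht h₁ h₂
    have hs0 : s ≠ 0 := by rintro rfl; simp at hn
    have ht0 : t ≠ 0 := by rintro rfl; simp_all
    obtain ⟨a, has, hamax⟩ := Multiset.exists_forall_le_of_isChain hs0 hs
    obtain ⟨b, hbt, hbmax⟩ := Multiset.exists_forall_le_of_isChain ht0 ht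
    obtain rfl : a = b := Prod.ext
      (le_antisymm (apply_le_of_map_eq monotone_fst h₁.symm hbmax has)
        (apply_le_of_map_eq monotone_fst h₁ hamax hbt))
      (le_antisymm (apply_le_of_map_eq monotone_snd h₂.symm hbmax has)
        (apply_le_of_map_eq monotone_snd h₂ hamax hbt))
    rw [← Multiset.cons_erase has, ← Multiset.cons_erase hbt]
    congr 1
    refine ih (by rw [Multiset.card_erase_of_mem has, hn]; rfl)
      (hs.mono fun _ => Multiset.mem_of_mem_erase) (ht.mono fun _ => Multiset.mem_of_mem_erase)
      ?_ ?_
    · rw [Multiset.map_erase_of_mem _ _ has, Multiset.map_erase_of_mem _ _ hbt, h₁]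
    · rw [Multiset.map_erase_of_mem _ _ has, Multiset.map_erase_of_mem _ _ hbt, h₂]

open Finset

namespace Sym

variable (α) [Fintype α] [DecidableEq α]

open Classical in
noncomputable def chains (n : ℕ) : Finset (Sym α n) := {s | IsChain (· ≤ ·) {a | a ∈ s}}

open Classical in
noncomputable def chainsBelow (a : α) (n : ℕ) : Finset (Sym α n) :=
  {s ∈ chains α n | ∀ b ∈ s, b ≤ a}

variable {α}

theorem mem_chains {n : ℕ} {s : Sym α n} : s ∈ chains α n ↔ IsChain (· ≤ ·) {a | a ∈ s} := by
  simp [chains]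

theorem mem_chainsBelow {a : α} {n : ℕ} {s : Sym α n} :
    s ∈ chainsBelow α a n ↔ IsChain (· ≤ ·) {a | a ∈ s} ∧ ∀ b ∈ s, b ≤ a := by
  simp [chainsBelow, mem_chains]

theorem chainsBelow_eq_chains {a : α} (ha : ∀ b, b ≤ a) (n : ℕ) :
    chainsBelow α a n = chains α n := by
  ext s
  simp [mem_chainsBelow, mem_chains, ha]

theorem card_chainsBelow_zero (a : α) : #(chainsBelow α a 0) = 1 :=
  card_eq_one.2 ⟨Sym.nil, eq_singleton_iff_unique_mem.2
    ⟨mem_chainsBelow.2 ⟨by simp [Sym.notMem_nil], by simp [Sym.notMem_nil]⟩,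
      fun s _ => Sym.eq_nil_of_card_zero s⟩⟩

theorem card_chainsBelow_succ [DecidableLE α] (a : α) (n : ℕ) :
    #(chainsBelow α a (n + 1)) = ∑ b with b ≤ a, #(chainsBelow α b n) := by
  rw [← card_sigma]
  symm
  refine card_bij (fun x _ => x.1 ::ₛ x.2) ?_ ?_ ?_
  · rintro ⟨b, s⟩ hbs
    simp only [mem_sigma, mem_filter, mem_univ, true_and, mem_chainsBelow] at hbs
    obtain ⟨hba, hs, hsb⟩ := hbs
    have hcons : {c | c ∈ b ::ₛ s} = insert b {c | c ∈ s} := by ext; simp [Sym.mem_cons]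
    refine mem_chainsBelow.2 ⟨hcons ▸ hs.insert fun c hc _ => Or.inr (hsb c hc), ?_⟩
    intro c hc
    rcases Sym.mem_cons.1 hc with rfl | hc
    exacts [hba, (hsb c hc).trans hba]
  · rintro ⟨b, s⟩ hbs ⟨b', s'⟩ hbs' h
    simp only [mem_sigma, mem_filter, mem_univ, true_and, mem_chainsBelow] at hbs hbs'
    have hb : b = b' := by
      rcases Sym.mem_cons.1 (h ▸ Sym.mem_cons_self b s) with hb | hb
      · exact hb
      rcases Sym.mem_cons.1 (h ▸ Sym.mem_cons_self b' s' : b' ∈ b ::ₛ s) with hb' | hb'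
      · exact hb'.symm
      exact le_antisymm (hbs'.2.2 b hb) (hbs.2.2 b' hb')
    subst hb
    rw [(Sym.cons_inj_right b s s').1 h]
  · intro s hs
    obtain ⟨hc, hsa⟩ := mem_chainsBelow.1 hs
    obtain ⟨b, hb, hbmax⟩ := Multiset.exists_forall_le_of_isChain
      (Multiset.card_pos.1 (by simp)) hc
    refine ⟨⟨b, s.erase b hb⟩, ?_, Sym.cons_erase hb⟩
    have hsub : ∀ c ∈ s.erase b hb, c ∈ s := fun c hc => Multiset.mem_of_mem_erase hc
    simp only [mem_sigma, mem_filter, mem_univ, true_and, mem_chainsBelow]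
    exact ⟨hsa b hb, hc.mono fun c hc => hsub c hc, fun c hc => hbmax c (hsub c hc)⟩

end Sym

end Chains

instance Sum.Lex.finite {α β : Type*} [Finite α] [Finite β] : Finite (α ⊕ₗ β) :=
  inferInstanceAs (Finite (α ⊕ β))

section Minors

variable {ι : Type*} [LinearOrder ι] (R : Type*) [CommRing R]

/-- `x_{ij} ↦ y_i z_j - y_j z_i` with `y_i = X (inlₗ i)` and `z_j = X (inrₗ j)`. All `y`'s come
before all `z`'s in `ι ⊕ₗ ι`, so for `i < j` the lexicographic leading monomial is `y_i z_j`. -/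
noncomputable def minorMap :
    MvPolynomial {p : ι × ι // p.1 < p.2} R →ₐ[R] MvPolynomial (ι ⊕ₗ ι) R :=
  aeval fun p => X (Sum.inlₗ p.1.1) * X (Sum.inrₗ p.1.2) - X (Sum.inlₗ p.1.2) * X (Sum.inrₗ p.1.1)

noncomputable def minorExponent (p : {p : ι × ι // p.1 < p.2}) : ι ⊕ₗ ι →₀ ℕ :=
  Finsupp.single (Sum.inlₗ p.1.1) 1 + Finsupp.single (Sum.inrₗ p.1.2) 1

theorem degree_minorMap_X [IsDomain R] [Finite ι] (p : {p : ι × ι // p.1 < p.2}) :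
    MonomialOrder.lex.degree (minorMap R (X p)) = minorExponent p := by
  have hX (a b : ι ⊕ₗ ι) : MonomialOrder.lex.degree (X a * X b : MvPolynomial (ι ⊕ₗ ι) R) =
      Finsupp.single a 1 + Finsupp.single b 1 := by
    rw [MonomialOrder.degree_mul (X_ne_zero a) (X_ne_zero b), MonomialOrder.degree_X,
      MonomialOrder.degree_X]
  rw [minorMap, aeval_X, MonomialOrder.degree_sub_of_lt, hX, minorExponent]
  rw [hX, hX, MonomialOrder.lex_lt_iff, Finsupp.Lex.lt_iff]
  refine ⟨Sum.inlₗ p.1.1, fun j hj => ?_, ?_⟩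
  · obtain ⟨i, rfl⟩ : ∃ i, j = Sum.inlₗ i := by
      rcases j with i | i
      exacts [⟨i, rfl⟩, absurd hj Sum.Lex.not_inr_lt_inl]
    have hi : i < p.1.1 := Sum.Lex.inl_lt_inl_iff.1 hj
    simp [hi.ne', (hi.trans p.2).ne']
  · simp [p.2.ne]

theorem minorMap_prod_X_ne_zero [IsDomain R] [Finite ι]
    (s : Multiset {p : ι × ι // p.1 < p.2}) : minorMap R (s.map X).prod ≠ 0 := by
  have hX (p : {p : ι × ι // p.1 < p.2}) : minorMap R (X p) ≠ 0 :=
    MonomialOrder.lex.ne_zero_of_degree_ne_zero (by rw [degree_minorMap_X]; simp [minorExponent])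
  rw [map_multiset_prod, Multiset.map_map]
  exact Multiset.prod_ne_zero fun h => by obtain ⟨p, -, hp⟩ := Multiset.mem_map.1 h; exact hX p hp

theorem degree_minorMap_prod_X [IsDomain R] [Finite ι] (s : Multiset {p : ι × ι // p.1 < p.2}) :
    MonomialOrder.lex.degree (minorMap R (s.map X).prod) = (s.map minorExponent).sum := by
  rw [map_multiset_prod, Multiset.map_map, MonomialOrder.degree_multiset_prod, Multiset.map_map]
  · exact congrArg _ (Multiset.map_congr rfl fun p _ => degree_minorMap_X R p)
  · intro f hf
    obtain ⟨p, -, rfl⟩ := Multiset.mem_map.1 hf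
    simpa using minorMap_prod_X_ne_zero R {p}

theorem sum_minorExponent_apply_inl (s : Multiset {p : ι × ι // p.1 < p.2}) (i : ι) :
    (s.map minorExponent).sum (Sum.inlₗ i) = (s.map (·.1.1)).count i := by
  classical
  induction s using Multiset.induction with
  | empty => simp
  | cons p s ih =>
    simp [ih, minorExponent, Multiset.count_cons, Finsupp.single_apply, eq_comm, add_comm]

theorem sum_minorExponent_apply_inr (s : Multiset {p : ι × ι // p.1 < p.2}) (i : ι) :
    (s.map minorExponent).sum (Sum.inrₗ i) = (s.map (·.1.2)).count i := by
  classical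
  induction s using Multiset.induction with
  | empty => simp
  | cons p s ih =>
    simp [ih, minorExponent, Multiset.count_cons, Finsupp.single_apply, eq_comm, add_comm]

theorem eq_of_sum_minorExponent_eq {s t : Multiset {p : ι × ι // p.1 < p.2}}
    (hs : IsChain (· ≤ ·) {p | p ∈ s}) (ht : IsChain (· ≤ ·) {p | p ∈ t})
    (h : (s.map minorExponent).sum = (t.map minorExponent).sum) : s = t := by
  have hchain {u : Multiset {p : ι × ι // p.1 < p.2}} (hu : IsChain (· ≤ ·) {p | p ∈ u}) :
      IsChain (· ≤ ·) {x | x ∈ u.map Subtype.val} := by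
    convert Subtype.mono_coe _ |>.isChain_image hu using 1
    ext; simp
  refine Multiset.map_injective Subtype.val_injective
    (Multiset.eq_of_isChain_of_map_fst_eq_of_map_snd_eq (hchain hs) (hchain ht) ?_ ?_)
  · ext i
    simpa [Multiset.map_map, sum_minorExponent_apply_inl] using congrArg (· (Sum.inlₗ i)) h
  · ext i
    simpa [Multiset.map_map, sum_minorExponent_apply_inr] using congrArg (· (Sum.inrₗ i)) h

end Minors

namespace PlueckerIdx

theorem nested_of_not_le {p q : PlueckerIdx} (h₁ : ¬p ≤ q) (h₂ : ¬q ≤ p) :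
    (p.1.1 < q.1.1 ∧ q.1.2 < p.1.2) ∨ (q.1.1 < p.1.1 ∧ p.1.2 < q.1.2) := by
  rw [← Subtype.coe_le_coe, Prod.le_def] at h₁ h₂
  omega

def spread (p : PlueckerIdx) : ℕ := ((p.1.2 : ℕ) - p.1.1) ^ 2

noncomputable def chainCountBelow (p : PlueckerIdx) (x : ℚ) : ℚ :=
  match (p.1.1 : ℕ), (p.1.2 : ℕ) with
  | 0, 1 => 1
  | 0, 2 => x + 1
  | 0, 3 => (x + 1) * (x + 2) / 2
  | 0, 4 => (x + 1) * (x + 2) * (x + 3) / 6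
  | 1, 2 => (x + 1) * (x + 2) / 2
  | 1, 3 => (x + 1) * (x + 2) * (2 * x + 3) / 6
  | 1, 4 => (x + 1) * (x + 2) * (x + 3) * (3 * x + 4) / 24
  | 2, 3 => (x + 1) * (x + 2) ^ 2 * (x + 3) / 12
  | 2, 4 => (x + 1) * (x + 2) ^ 3 * (x + 3) / 24
  | 3, 4 => (x + 1) * (x + 2) ^ 2 * (x + 3) ^ 2 * (x + 4) / 144
  | _, _ => 0

theorem sum_chainCountBelow (p : PlueckerIdx) (x : ℚ) :
    ∑ q with q ≤ p, chainCountBelow q x = chainCountBelow p (x + 1) := by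
  have huniv : (Finset.univ : Finset PlueckerIdx) = {⟨(0, 1), by decide⟩, ⟨(0, 2), by decide⟩,
      ⟨(0, 3), by decide⟩, ⟨(0, 4), by decide⟩, ⟨(1, 2), by decide⟩, ⟨(1, 3), by decide⟩,
      ⟨(1, 4), by decide⟩, ⟨(2, 3), by decide⟩, ⟨(2, 4), by decide⟩, ⟨(3, 4), by decide⟩} := by
    decide
  rw [Finset.sum_filter, huniv]
  fin_cases p <;> simp [chainCountBelow] <;> ring

theorem card_chainsBelow (p : PlueckerIdx) (n : ℕ) :
    ((Sym.chainsBelow PlueckerIdx p n).card : ℚ) = chainCountBelow p n := by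
  induction n generalizing p with
  | zero =>
    rw [Sym.card_chainsBelow_zero]
    fin_cases p <;> norm_num [chainCountBelow]
  | succ n ih =>
    rw [Sym.card_chainsBelow_succ, Nat.cast_sum, Finset.sum_congr rfl fun q _ => ih q,
      sum_chainCountBelow, Nat.cast_succ]

end PlueckerIdx

theorem Nat.sq_sub_add_sq_sub_lt {a b c d : ℕ} (hab : a < b) (hbc : b < c) (hcd : c < d) :
    (c - a) ^ 2 + (d - b) ^ 2 < (d - a) ^ 2 + (c - b) ^ 2 ∧
      (b - a) ^ 2 + (d - c) ^ 2 < (d - a) ^ 2 + (c - b) ^ 2 := by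
  zify [hab.le, hbc.le, hcd.le, hab.le.trans hbc.le, hbc.le.trans hcd.le,
    (hab.trans hbc).le.trans hcd.le]
  constructor <;> nlinarith

section

variable (k : Type*) [Field k]

theorem relation_mem_plueckerIdeal {a b c d : Fin 5} (hab : a < b) (hbc : b < c) (hcd : c < d) :
    X ⟨(a, b), hab⟩ * X ⟨(c, d), hcd⟩ - X ⟨(a, c), hab.trans hbc⟩ * X ⟨(b, d), hbc.trans hcd⟩
      + X ⟨(a, d), (hab.trans hbc).trans hcd⟩ * X ⟨(b, c), hbc⟩ ∈ plueckerIdeal k := by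
  obtain ⟨rfl, rfl, rfl, rfl⟩ | ⟨rfl, rfl, rfl, rfl⟩ | ⟨rfl, rfl, rfl, rfl⟩ | ⟨rfl, rfl, rfl, rfl⟩ |
      ⟨rfl, rfl, rfl, rfl⟩ := (by decide : ∀ a b c d : Fin 5, a < b → b < c → c < d →
        a = 1 ∧ b = 2 ∧ c = 3 ∧ d = 4 ∨ a = 0 ∧ b = 2 ∧ c = 3 ∧ d = 4 ∨
        a = 0 ∧ b = 1 ∧ c = 3 ∧ d = 4 ∨ a = 0 ∧ b = 1 ∧ c = 2 ∧ d = 4 ∨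
        a = 0 ∧ b = 1 ∧ c = 2 ∧ d = 3) a b c d hab hbc hcd
  exacts [Ideal.subset_span ⟨0, rfl⟩, Ideal.subset_span ⟨1, rfl⟩, Ideal.subset_span ⟨2, rfl⟩,
    Ideal.subset_span ⟨3, rfl⟩, Ideal.subset_span ⟨4, rfl⟩]

theorem mk_X_mul_X_mul_of_nested {p q : PlueckerIdx} (h₁ : p.1.1 < q.1.1) (h₂ : q.1.2 < p.1.2)
    (r : MvPolynomial PlueckerIdx k) :
    Ideal.Quotient.mk (plueckerIdeal k) (X p * X q * r) =
      Ideal.Quotient.mk (plueckerIdeal k)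
          (X ⟨(p.1.1, q.1.2), h₁.trans q.2⟩ * X ⟨(q.1.1, p.1.2), q.2.trans h₂⟩ * r) -
        Ideal.Quotient.mk (plueckerIdeal k)
          (X ⟨(p.1.1, q.1.1), h₁⟩ * X ⟨(q.1.2, p.1.2), h₂⟩ * r) := by
  rw [← map_sub, Ideal.Quotient.eq, ← sub_mul]
  convert (plueckerIdeal k).mul_mem_right r (relation_mem_plueckerIdeal k h₁ q.2 h₂) using 1
  ring

theorem exists_straighten {s : Multiset PlueckerIdx} (hs : ¬IsChain (· ≤ ·) {p | p ∈ s}) :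
    ∃ s₁ s₂ : Multiset PlueckerIdx,
      Multiset.card s₁ = Multiset.card s ∧ Multiset.card s₂ = Multiset.card s ∧
      (s₁.map PlueckerIdx.spread).sum < (s.map PlueckerIdx.spread).sum ∧
      (s₂.map PlueckerIdx.spread).sum < (s.map PlueckerIdx.spread).sum ∧
      Ideal.Quotient.mk (plueckerIdeal k) (s.map X).prod =
        Ideal.Quotient.mk (plueckerIdeal k) (s₁.map X).prod -
          Ideal.Quotient.mk (plueckerIdeal k) (s₂.map X).prod := by
  obtain ⟨p, hp, q, hq, hne, hpq⟩ : ∃ p ∈ s, ∃ q ∈ s, p ≠ q ∧ ¬(p ≤ q ∨ q ≤ p) := by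
    simpa [IsChain, Set.Pairwise] using hs
  wlog hnest : p.1.1 < q.1.1 ∧ q.1.2 < p.1.2 generalizing p q
  · exact this q hq p hp hne.symm (by tauto)
      ((PlueckerIdx.nested_of_not_le (not_or.1 hpq).1 (not_or.1 hpq).2).resolve_left hnest)
  obtain ⟨h₁, h₂⟩ := hnest
  obtain ⟨t, rfl⟩ := Multiset.exists_cons_of_mem hp
  obtain ⟨r, rfl⟩ := Multiset.exists_cons_of_mem ((Multiset.mem_cons.1 hq).resolve_left hne.symm)
  have hspread := Nat.sq_sub_add_sq_sub_lt (Fin.lt_def.1 h₁) (Fin.lt_def.1 q.2) (Fin.lt_def.1 h₂)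
  refine ⟨⟨(p.1.1, q.1.2), h₁.trans q.2⟩ ::ₘ ⟨(q.1.1, p.1.2), q.2.trans h₂⟩ ::ₘ r,
    ⟨(p.1.1, q.1.1), h₁⟩ ::ₘ ⟨(q.1.2, p.1.2), h₂⟩ ::ₘ r, by simp, by simp, ?_, ?_, ?_⟩
  · simp only [Multiset.map_cons, Multiset.sum_cons, PlueckerIdx.spread]
    omega
  · simp only [Multiset.map_cons, Multiset.sum_cons, PlueckerIdx.spread]
    omega
  · simp only [Multiset.map_cons, Multiset.prod_cons, ← mul_assoc]
    exact mk_X_mul_X_mul_of_nested k h₁ h₂ _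

noncomputable def standardMonomial {n : ℕ} (s : Sym.chains PlueckerIdx n) :
    MvPolynomial PlueckerIdx k :=
  (s.1.1.map X).prod

theorem mk_prod_X_mem_span_standardMonomial {n : ℕ} (s : Multiset PlueckerIdx)
    (hs : Multiset.card s = n) :
    Ideal.Quotient.mk (plueckerIdeal k) (s.map X).prod ∈
      Submodule.span k (Set.range fun t =>
        Ideal.Quotient.mk (plueckerIdeal k) (standardMonomial k (n := n) t)) := by
  induction hw : (s.map PlueckerIdx.spread).sum using Nat.strong_induction_on generalizing s with
  | _ w ih =>
  by_cases hc : IsChain (· ≤ ·) {p | p ∈ s}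
  · exact Submodule.subset_span ⟨⟨⟨s, hs⟩, Sym.mem_chains.2 hc⟩, rfl⟩
  obtain ⟨s₁, s₂, h₁, h₂, hw₁, hw₂, heq⟩ := exists_straighten k hc
  rw [heq]
  exact sub_mem (ih _ (hw ▸ hw₁) s₁ (h₁.trans hs) rfl) (ih _ (hw ▸ hw₂) s₂ (h₂.trans hs) rfl)

theorem map_homogeneousSubmodule_eq_span_standardMonomial (n : ℕ) :
    (homogeneousSubmodule PlueckerIdx k n).map
        (Ideal.Quotient.mkₐ k (plueckerIdeal k)).toLinearMap =
      Submodule.span k (Set.range fun t =>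
        Ideal.Quotient.mk (plueckerIdeal k) (standardMonomial k (n := n) t)) := by
  refine le_antisymm ?_ (Submodule.span_le.2 ?_)
  · rw [homogeneousSubmodule_eq_finsupp_supported, AddMonoidAlgebra.supported_eq_span_single,
      Submodule.map_span, Submodule.span_le]
    rintro _ ⟨_, ⟨d, hd, rfl⟩, rfl⟩
    dsimp only
    rw [single_eq_monomial, monomial_one_eq_prod_toMultiset]
    exact mk_prod_X_mem_span_standardMonomial k _ (by rw [Finsupp.card_toMultiset]; exact hd)
  · rintro _ ⟨t, rfl⟩
    refine ⟨standardMonomial k t, ?_, rfl⟩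
    simpa [standardMonomial] using isHomogeneous_multiset_prod_X (R := k) t.1.1

theorem minorMap_pfaffian (m : Fin 5) : minorMap k (pfaffian k m) = 0 := by
  fin_cases m <;> simp [pfaffian, xv, minorMap] <;> ring

theorem plueckerIdeal_le_ker_minorMap : plueckerIdeal k ≤ RingHom.ker (minorMap k) :=
  Ideal.span_le.2 fun _ ⟨m, hm⟩ => hm ▸ minorMap_pfaffian k m

theorem linearIndependent_mk_standardMonomial (n : ℕ) :
    LinearIndependent k fun t =>
      Ideal.Quotient.mk (plueckerIdeal k) (standardMonomial k (n := n) t) := by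
  refine LinearIndependent.of_comp (Ideal.Quotient.liftₐ (plueckerIdeal k) (minorMap k)
    (plueckerIdeal_le_ker_minorMap k)).toLinearMap ?_
  refine MonomialOrder.lex.linearIndependent_of_injective_degree
    (fun t => minorMap_prod_X_ne_zero k _) fun s t hst => Subtype.ext (Sym.coe_injective ?_)
  refine eq_of_sum_minorExponent_eq (Sym.mem_chains.1 s.2) (Sym.mem_chains.1 t.2) ?_
  rw [← degree_minorMap_prod_X k, ← degree_minorMap_prod_X k]
  exact hst

end

theorem stmt2 (n : ℕ) :
    plueckerDim k n = (n + 1) * (n + 2) ^ 2 * (n + 3) ^ 2 * (n + 4) / 144 := by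
  have hdim : plueckerDim k n = (Sym.chains PlueckerIdx n).card := by
    rw [plueckerDim, map_homogeneousSubmodule_eq_span_standardMonomial,
      finrank_span_eq_card (linearIndependent_mk_standardMonomial k n), Fintype.card_coe]
  have hcount :
      144 * (Sym.chains PlueckerIdx n).card = (n + 1) * (n + 2) ^ 2 * (n + 3) ^ 2 * (n + 4) := by
    have htop : ∀ p : PlueckerIdx, p ≤ ⟨(3, 4), by decide⟩ := by decide
    rw [← Sym.chainsBelow_eq_chains htop]
    qify
    rw [PlueckerIdx.card_chainsBelow]
    simp [PlueckerIdx.chainCountBelow]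
    ring
  rw [hdim, ← hcount, Nat.mul_div_cancel_left _ (by norm_num)]
end

section
/- Let k be a field of characteristic zero and let R = k[x_{ij} : 0 ≤ i < j ≤ 4] be the polynomial ring in 10 variables. For each m ∈ {0,1,2,3,4}, let a < b < c < d be the elements of {0,1,2,3,4} \ {m} and set q_m = x_{ab} x_{cd} − x_{ac} x_{bd} + x_{ad} x_{bc}. Let I = (q_0, …, q_4) and S = R/I, graded by total degree, and let a_n denote the k-dimension of the degree-n homogeneous component of S. Then in the formal power series ring ℤ[[t]] one has (Σ_{n≥0} a_n t^n) · (1 − t)^{10} = 1 − 5t² + 5t³ − t⁵. -/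
open MvPolynomial

variable (k : Type*) [Field k] [CharZero k]

/-!
Hodge's standard monomial theory for `Gr(2, 5)`. Order the Plücker variables by
`x_{ij} ≤ x_{i'j'}` iff `i ≤ i'` and `j ≤ j'`, and call a monomial standard when its variables
form a chain. A Plücker quadric rewrites a crossing product `x_{ad} x_{bc}` (`a < b < c < d`) as
`x_{ac} x_{bd} - x_{ab} x_{cd}`, which lowers `∑ (j - i)²`, so the standard monomials of degree `n`
span `S_n`. They are linearly independent: `x_{ij} ↦` (the `2 × 2` minor on columns `i, j` of a
generic `2 × 5` matrix) kills `I`, and sends distinct standard monomials to polynomials with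
distinct lexicographic leading monomials, because a multichain is recovered from the multisets of
its first and of its second indices. Hence `a_n` counts the multichains of size `n` in the poset of
variables. Removing the top element of a multichain gives a triangular system of power series
equations over the down-sets `Iic p`; for the whole poset its solution is
`(1 + 3t + t²) / (1 - t)⁷`.
-/

open Finsupp
open scoped MonomialOrder

section Multichains

variable {α : Type*}

theorem coe_support_add_single_one (w : α →₀ ℕ) (q : α) :
    ((w + single q 1).support : Set α) = insert q (w.support : Set α) := by
  classical
  rw [support_add_eq_union, support_single _ one_ne_zero, Finset.union_comm]
  simp

theorem exists_add_single_one_add_single_one_eq {w : α →₀ ℕ} {p q : α} (hpq : p ≠ q)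
    (hp : p ∈ w.support) (hq : q ∈ w.support) : ∃ u, u + single p 1 + single q 1 = w := by
  have hq' : (w - single p 1 : α →₀ ℕ) q ≠ 0 := by
    rwa [tsub_apply, single_eq_of_ne hpq.symm, tsub_zero, ← Finsupp.mem_support_iff]
  refine ⟨w - single p 1 - single q 1, ?_⟩
  rw [add_right_comm, sub_add_single_one_cancel hq',
    sub_add_single_one_cancel (Finsupp.mem_support_iff.mp hp)]

variable [PartialOrder α]

/-- Multichains of size `n` in `s`, as multiplicity functions; read as exponent vectors they are
the standard monomials. -/
def multichains (s : Set α) (n : ℕ) : Set (α →₀ ℕ) :=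
  {w | IsChain (· ≤ ·) (w.support : Set α) ∧ w.degree = n ∧ (w.support : Set α) ⊆ s}

theorem multichains_finite [Finite α] (s : Set α) (n : ℕ) : (multichains s n).Finite :=
  (finite_of_degree_le n).subset fun _ hw => hw.2.1.le

theorem multichains_zero (s : Set α) : multichains s 0 = {0} := by
  ext w
  simp only [multichains, Set.mem_ofPred_eq, Set.mem_singleton_iff, degree_eq_zero_iff]
  constructor
  · exact fun h => h.2.1
  · rintro rfl
    simp

theorem Finset.exists_isGreatest_of_isChain {s : Finset α} (hc : IsChain (· ≤ ·) (s : Set α))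
    (hs : s.Nonempty) : ∃ q, IsGreatest (s : Set α) q := by
  obtain ⟨q, hq, hmax⟩ := s.exists_maximal hs
  refine ⟨q, hq, fun r hr => ?_⟩
  rcases eq_or_ne r q with rfl | hne
  · exact le_rfl
  · exact (hc hr hq hne).elim id (hmax hr)

theorem isGreatest_support_add_single_one {w : α →₀ ℕ} {q : α}
    (hw : (w.support : Set α) ⊆ Set.Iic q) : IsGreatest ((w + single q 1).support : Set α) q := by
  rw [coe_support_add_single_one]
  exact ⟨Set.mem_insert _ _, Set.insert_subset_iff.mpr ⟨le_refl q, hw⟩⟩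

theorem add_single_one_mem_multichains {s : Set α} (hs : IsLowerSet s) {q : α} (hq : q ∈ s)
    {n : ℕ} {w : α →₀ ℕ} (hw : w ∈ multichains (Set.Iic q) n) :
    w + single q 1 ∈ multichains s (n + 1) := by
  obtain ⟨hchain, hdeg, hsupp⟩ := hw
  refine ⟨?_, by rw [map_add, hdeg, degree_single], ?_⟩
  · rw [coe_support_add_single_one]
    exact hchain.insert fun r hr _ => Or.inr (hsupp hr)
  · rw [coe_support_add_single_one]
    exact Set.insert_subset hq fun r hr => hs (hsupp hr) hq

theorem exists_eq_add_single_one_of_mem_multichains {s : Set α} {n : ℕ} {w : α →₀ ℕ}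
    (hw : w ∈ multichains s (n + 1)) :
    ∃ q ∈ s, ∃ u ∈ multichains (Set.Iic q) n, u + single q 1 = w := by
  obtain ⟨hchain, hdeg, hsupp⟩ := hw
  have hne : w.support.Nonempty := by
    rw [support_nonempty_iff]
    rintro rfl
    simp at hdeg
  obtain ⟨q, hq, hmax⟩ := Finset.exists_isGreatest_of_isChain hchain hne
  have hcancel : w - single q 1 + single q 1 = w :=
    sub_add_single_one_cancel (Finsupp.mem_support_iff.mp hq)
  refine ⟨q, hsupp hq, w - single q 1,
    ⟨hchain.mono support_tsub, ?_, fun r hr => hmax (support_tsub hr)⟩, hcancel⟩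
  have := congrArg degree hcancel
  rw [map_add, degree_single, hdeg] at this
  omega

theorem card_multichains_succ [Finite α] (s : Finset α) (hs : IsLowerSet (s : Set α)) (n : ℕ) :
    Nat.card (multichains (s : Set α) (n + 1)) =
      ∑ q ∈ s, Nat.card (multichains (Set.Iic q) n) := by
  have : ∀ q : s, Finite (multichains (Set.Iic (q : α)) n) :=
    fun q => (multichains_finite _ n).to_subtype
  rw [← Finset.sum_coe_sort s, ← Nat.card_sigma]
  symm
  refine Nat.card_eq_of_bijective (fun x => ⟨(x.2 : α →₀ ℕ) + single (x.1 : α) 1,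
    add_single_one_mem_multichains hs x.1.2 x.2.2⟩) ⟨?_, ?_⟩
  · rintro ⟨⟨q, hq⟩, ⟨w, hw⟩⟩ ⟨⟨q', hq'⟩, ⟨w', hw'⟩⟩ h
    have hsum : w + single q 1 = w' + single q' 1 := congrArg Subtype.val h
    obtain rfl : q = q' := (isGreatest_support_add_single_one hw.2.2).unique
      (hsum ▸ isGreatest_support_add_single_one hw'.2.2)
    obtain rfl : w = w' := add_right_cancel hsum
    rfl
  · rintro ⟨w, hw⟩
    obtain ⟨q, hq, u, hu, rfl⟩ := exists_eq_add_single_one_of_mem_multichains hw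
    exact ⟨⟨⟨q, hq⟩, ⟨u, hu⟩⟩, rfl⟩

noncomputable def chainSeries (s : Set α) : PowerSeries ℤ :=
  PowerSeries.mk fun n => (Nat.card (multichains s n) : ℤ)

theorem chainSeries_eq_one_add_X_mul_sum [Finite α] (s : Finset α)
    (hs : IsLowerSet (s : Set α)) :
    chainSeries (s : Set α) = 1 + PowerSeries.X * ∑ q ∈ s, chainSeries (Set.Iic q) := by
  ext (_ | n)
  · simp [chainSeries, multichains_zero]
  · simp only [chainSeries, PowerSeries.coeff_mk, map_add, PowerSeries.coeff_one,
      PowerSeries.coeff_succ_X_mul, map_sum, card_multichains_succ s hs]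
    push_cast
    simp

theorem one_sub_X_pow_mul_chainSeries_Iic [Finite α] [LocallyFiniteOrderBot α] (e : α → ℕ)
    (he : StrictMono e) (N : α → PowerSeries ℤ)
    (hN : ∀ p, N p = (1 - PowerSeries.X) ^ e p +
      PowerSeries.X * ∑ q ∈ Finset.Iio p, (1 - PowerSeries.X) ^ (e p - e q - 1) * N q)
    (p : α) : (1 - PowerSeries.X) ^ (e p + 1) * chainSeries (Set.Iic p) = N p := by
  induction p using WellFoundedLT.induction with
  | _ p ih =>
  have hrec := chainSeries_eq_one_add_X_mul_sum (Finset.Iic p) (by simpa using isLowerSet_Iic p)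
  rw [Finset.coe_Iic, Finset.Iic_eq_cons_Iio, Finset.sum_cons] at hrec
  have hsum : (1 - PowerSeries.X) ^ e p * ∑ q ∈ Finset.Iio p, chainSeries (Set.Iic q) =
      ∑ q ∈ Finset.Iio p, (1 - PowerSeries.X) ^ (e p - e q - 1) * N q := by
    rw [Finset.mul_sum]
    refine Finset.sum_congr rfl fun q hq => ?_
    have hlt := he (Finset.mem_Iio.mp hq)
    rw [← ih q (Finset.mem_Iio.mp hq), ← mul_assoc, ← pow_add,
      show e p - e q - 1 + (e q + 1) = e p by omega]
  rw [hN p, ← hsum]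
  linear_combination (1 - PowerSeries.X) ^ e p * hrec

end Multichains

theorem MonomialOrder.linearIndependent_of_injective_degree_s3 {σ ι R : Type*} [CommRing R]
    [NoZeroDivisors R] (m : MonomialOrder σ) {f : ι → MvPolynomial σ R} (hf : ∀ i, f i ≠ 0)
    (hinj : Function.Injective fun i => m.degree (f i)) : LinearIndependent R f := by
  classical
  rw [linearIndependent_iff']
  intro s g hg i hi
  by_contra hgi
  -- only the term of largest leading degree contributes to the coefficient at that degree
  obtain ⟨j, hj, hmax⟩ := (s.filter (g · ≠ 0)).exists_max_image
    (fun i => m.toSyn (m.degree (f i))) ⟨i, Finset.mem_filter.mpr ⟨hi, hgi⟩⟩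
  rw [Finset.mem_filter] at hj
  have hcoeff := congrArg (coeff (m.degree (f j))) hg
  rw [coeff_sum, Finset.sum_eq_single j, coeff_smul, coeff_zero, smul_eq_mul] at hcoeff
  · exact mul_ne_zero hj.2 (m.coeff_degree_ne_zero_iff.mpr (hf j)) hcoeff
  · intro i hi hij
    by_cases hgi : g i = 0
    · rw [hgi, zero_smul, coeff_zero]
    · have hlt : m.toSyn (m.degree (f i)) < m.toSyn (m.degree (f j)) :=
        (hmax i (Finset.mem_filter.mpr ⟨hi, hgi⟩)).lt_of_ne
          fun h => hij (hinj (m.toSyn.injective h))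
      rw [coeff_smul, m.coeff_eq_zero_of_lt hlt, smul_zero]
  · exact fun h => absurd hj.1 h

abbrev Pairs (n : ℕ) : Type := {p : Fin n × Fin n // p.1 < p.2}

section Minors

variable {n : ℕ} {K : Type*} [Field K]

/-- The rows of the generic `2 × n` matrix are ordered lexicographically before its columns, so
that the diagonal term of each minor is the leading one for `MonomialOrder.lex`. -/
noncomputable def minor (p : Pairs n) : MvPolynomial (Fin 2 ×ₗ Fin n) K :=
  X (toLex (0, p.1.1)) * X (toLex (1, p.1.2)) - X (toLex (0, p.1.2)) * X (toLex (1, p.1.1))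

noncomputable def minorsHom : MvPolynomial (Pairs n) K →ₐ[K] MvPolynomial (Fin 2 ×ₗ Fin n) K :=
  aeval minor

noncomputable def diagExp (p : Pairs n) : Fin 2 ×ₗ Fin n →₀ ℕ :=
  single (toLex (0, p.1.1)) 1 + single (toLex (1, p.1.2)) 1

noncomputable def antidiagExp (p : Pairs n) : Fin 2 ×ₗ Fin n →₀ ℕ :=
  single (toLex (0, p.1.2)) 1 + single (toLex (1, p.1.1)) 1

theorem antidiagExp_lt_diagExp (p : Pairs n) : antidiagExp p ≺[MonomialOrder.lex] diagExp p := by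
  obtain ⟨⟨i, j⟩, hij : i < j⟩ := p
  rw [MonomialOrder.lex_lt_iff, Finsupp.Lex.lt_iff]
  refine ⟨toLex (0, i), fun k hk => ?_, by simp [antidiagExp, diagExp, hij.ne']⟩
  obtain ⟨⟨a, b⟩, rfl⟩ := toLex.surjective k
  simp only [Prod.Lex.toLex_lt_toLex, not_lt_zero, false_or] at hk
  obtain ⟨rfl, hb⟩ := hk
  simp [antidiagExp, diagExp, hb.ne', (hb.trans hij).ne']

theorem minor_eq (p : Pairs n) :
    (minor p : MvPolynomial (Fin 2 ×ₗ Fin n) K) =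
      monomial (diagExp p) 1 - monomial (antidiagExp p) 1 := by
  simp only [minor, diagExp, antidiagExp, X, monomial_mul, mul_one]

theorem degree_minor (p : Pairs n) :
    MonomialOrder.lex.degree (minor p : MvPolynomial (Fin 2 ×ₗ Fin n) K) = diagExp p := by
  classical
  rw [minor_eq, MonomialOrder.degree_sub_of_lt] <;>
    simp only [MonomialOrder.degree_monomial, one_ne_zero, if_false]
  exact antidiagExp_lt_diagExp p

theorem monic_minor (p : Pairs n) :
    MonomialOrder.lex.Monic (minor p : MvPolynomial (Fin 2 ×ₗ Fin n) K) := by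
  classical
  rw [MonomialOrder.Monic, minor_eq, MonomialOrder.leadingCoeff_sub_of_lt] <;>
    simp only [MonomialOrder.degree_monomial, MonomialOrder.leadingCoeff_monomial, one_ne_zero,
      if_false]
  exact antidiagExp_lt_diagExp p

noncomputable def leadExp : (Pairs n →₀ ℕ) →ₗ[ℕ] Fin 2 ×ₗ Fin n →₀ ℕ :=
  linearCombination ℕ diagExp

theorem minorsHom_monomial (w : Pairs n →₀ ℕ) :
    minorsHom (monomial w (1 : K)) = ∏ p ∈ w.support, minor p ^ w p := by
  rw [minorsHom, aeval_monomial, map_one, one_mul, Finsupp.prod]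

theorem monic_minorsHom_monomial (w : Pairs n →₀ ℕ) :
    MonomialOrder.lex.Monic (minorsHom (monomial w (1 : K))) := by
  rw [minorsHom_monomial]
  exact MonomialOrder.Monic.prod fun p _ => (monic_minor p).pow

theorem degree_minorsHom_monomial (w : Pairs n →₀ ℕ) :
    MonomialOrder.lex.degree (minorsHom (monomial w (1 : K))) = leadExp w := by
  rw [minorsHom_monomial,
    MonomialOrder.degree_prod fun p _ => pow_ne_zero _ (monic_minor p).ne_zero]
  simp [MonomialOrder.degree_pow, degree_minor, leadExp, linearCombination_apply, Finsupp.sum]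

theorem leadExp_apply_ne_zero (w : Pairs n →₀ ℕ) (a : Fin 2 ×ₗ Fin n) :
    leadExp w a ≠ 0 ↔ ∃ p ∈ w.support, diagExp p a ≠ 0 := by
  simp only [leadExp, linearCombination_apply, Finsupp.sum, Finsupp.finsetSum_apply,
    Finsupp.smul_apply, smul_eq_mul, ne_eq, Finset.sum_eq_zero_iff, not_forall, mul_eq_zero,
    not_or, Finsupp.mem_support_iff, exists_prop]
  exact exists_congr fun p => ⟨fun ⟨h, h'⟩ => ⟨h, h'.2⟩, fun ⟨h, h'⟩ => ⟨h, h, h'⟩⟩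

theorem diagExp_apply_zero_ne_zero (p : Pairs n) (i : Fin n) :
    diagExp p (toLex (0, i)) ≠ 0 ↔ p.1.1 = i := by
  simp [diagExp, Finsupp.single_apply]

theorem diagExp_apply_one_ne_zero (p : Pairs n) (j : Fin n) :
    diagExp p (toLex (1, j)) ≠ 0 ↔ p.1.2 = j := by
  simp [diagExp, Finsupp.single_apply]

theorem le_of_leadExp_eq {w w' : Pairs n →₀ ℕ} (h : leadExp w = leadExp w') {q q' : Pairs n}
    (hq : q ∈ w.support) (hq' : IsGreatest (w'.support : Set (Pairs n)) q') : q ≤ q' := by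
  have hcover (a) (ha : diagExp q a ≠ 0) : ∃ p ∈ w'.support, diagExp p a ≠ 0 :=
    (leadExp_apply_ne_zero w' a).mp (h ▸ (leadExp_apply_ne_zero w a).mpr ⟨q, hq, ha⟩)
  obtain ⟨p₁, hp₁, h₁⟩ := hcover _ ((diagExp_apply_zero_ne_zero q _).mpr rfl)
  obtain ⟨p₂, hp₂, h₂⟩ := hcover _ ((diagExp_apply_one_ne_zero q _).mpr rfl)
  exact ⟨(diagExp_apply_zero_ne_zero p₁ _).mp h₁ ▸ (hq'.2 hp₁).1,
    (diagExp_apply_one_ne_zero p₂ _).mp h₂ ▸ (hq'.2 hp₂).2⟩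

theorem leadExp_injOn_multichains (d : ℕ) :
    Set.InjOn leadExp (multichains (Set.univ : Set (Pairs n)) d) := by
  induction d with
  | zero =>
    intro w hw w' hw' _
    rw [multichains_zero] at hw hw'
    rw [hw, hw']
  | succ d ih =>
    intro w hw w' hw' h
    obtain ⟨q, -, u, hu, rfl⟩ := exists_eq_add_single_one_of_mem_multichains hw
    obtain ⟨q', -, u', hu', rfl⟩ := exists_eq_add_single_one_of_mem_multichains hw'
    have hq := isGreatest_support_add_single_one hu.2.2
    have hq' := isGreatest_support_add_single_one hu'.2.2
    obtain rfl : q = q' :=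
      le_antisymm (le_of_leadExp_eq h hq.1 hq') (le_of_leadExp_eq h.symm hq'.1 hq)
    rw [map_add, map_add] at h
    rw [ih ⟨hu.1, hu.2.1, Set.subset_univ _⟩ ⟨hu'.1, hu'.2.1, Set.subset_univ _⟩
      (add_right_cancel h)]

variable (K) in
theorem linearIndependent_minorsHom_monomial (d : ℕ) :
    LinearIndependent K fun w : multichains (Set.univ : Set (Pairs n)) d =>
      minorsHom (monomial (w : Pairs n →₀ ℕ) (1 : K)) :=
  MonomialOrder.lex.linearIndependent_of_injective_degree_s3
    (fun _ => (monic_minorsHom_monomial _).ne_zero) fun w w' h =>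
      Subtype.ext (leadExp_injOn_multichains d w.2 w'.2
        (by simpa only [degree_minorsHom_monomial] using h))

end Minors

section Crossing

variable {n : ℕ}

theorem exists_crossing_of_not_isChain {w : Pairs n →₀ ℕ}
    (hw : ¬IsChain (· ≤ ·) (w.support : Set (Pairs n))) :
    ∃ (a b c d : Fin n) (hab : a < b) (hbc : b < c) (hcd : c < d),
      ⟨(a, d), hab.trans (hbc.trans hcd)⟩ ∈ w.support ∧ ⟨(b, c), hbc⟩ ∈ w.support := by
  simp only [IsChain, Set.Pairwise, Finset.mem_coe, not_forall] at hw
  obtain ⟨⟨⟨i, j⟩, hij⟩, hp, ⟨⟨i', j'⟩, hij'⟩, hq, -, hpq⟩ := hw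
  simp only [not_or, Subtype.mk_le_mk, Prod.mk_le_mk, not_and_or, not_le] at hpq
  rcases lt_trichotomy i i' with h | rfl | h
  · exact ⟨i, i', j', j, h, hij', by omega, hp, hq⟩
  · omega
  · exact ⟨i', i, j, j', h, hij, by omega, hq, hp⟩

/-- The termination measure for straightening, see `spread_lt_of_crossing`. -/
def spread (p : Pairs n) : ℕ := ((p.1.2 : ℕ) - p.1.1) ^ 2

noncomputable def totalSpread : (Pairs n →₀ ℕ) →ₗ[ℕ] ℕ := linearCombination ℕ spread

theorem spread_lt_of_crossing {a b c d : Fin n} (hab : a < b) (hbc : b < c) (hcd : c < d) :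
    spread ⟨(a, c), hab.trans hbc⟩ + spread ⟨(b, d), hbc.trans hcd⟩ <
        spread ⟨(a, d), hab.trans (hbc.trans hcd)⟩ + spread ⟨(b, c), hbc⟩ ∧
      spread ⟨(a, b), hab⟩ + spread ⟨(c, d), hcd⟩ <
        spread ⟨(a, d), hab.trans (hbc.trans hcd)⟩ + spread ⟨(b, c), hbc⟩ := by
  simp only [spread]
  rw [Fin.lt_def] at hab hbc hcd
  rw [show (c : ℕ) - a = (b - a) + (c - b) by omega,
    show (d : ℕ) - b = (c - b) + (d - c) by omega,
    show (d : ℕ) - a = (b - a) + (c - b) + (d - c) by omega]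
  have hx : 0 < (b : ℕ) - a := by omega
  have hy : 0 < (c : ℕ) - b := by omega
  have hz : 0 < (d : ℕ) - c := by omega
  constructor <;> nlinarith [Nat.mul_pos hx hz]

end Crossing

section Straightening

variable (K : Type*) [Field K]

theorem minorsHom_pfaffian (m : Fin 5) : minorsHom (pfaffian K m) = 0 := by
  fin_cases m <;>
    simp only [minorsHom, pfaffian, xv, map_add, map_sub, map_mul, aeval_X, minor] <;>
    ring

theorem plueckerIdeal_le_ker_minorsHom :
    plueckerIdeal K ≤ RingHom.ker (minorsHom : MvPolynomial PlueckerIdx K →ₐ[K] _) := by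
  rw [plueckerIdeal, Ideal.span_le]
  rintro _ ⟨m, rfl⟩
  exact minorsHom_pfaffian K m

theorem plueckerRelation_mem_plueckerIdeal {a b c d : Fin 5} (hab : a < b) (hbc : b < c)
    (hcd : c < d) :
    xv K a b hab * xv K c d hcd - xv K a c (hab.trans hbc) * xv K b d (hbc.trans hcd) +
      xv K a d (hab.trans (hbc.trans hcd)) * xv K b c hbc ∈ plueckerIdeal K := by
  obtain ⟨rfl, rfl, rfl, rfl⟩ | ⟨rfl, rfl, rfl, rfl⟩ | ⟨rfl, rfl, rfl, rfl⟩ |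
      ⟨rfl, rfl, rfl, rfl⟩ | ⟨rfl, rfl, rfl, rfl⟩ :
      (a = 0 ∧ b = 1 ∧ c = 2 ∧ d = 3) ∨ (a = 0 ∧ b = 1 ∧ c = 2 ∧ d = 4) ∨
        (a = 0 ∧ b = 1 ∧ c = 3 ∧ d = 4) ∨ (a = 0 ∧ b = 2 ∧ c = 3 ∧ d = 4) ∨
        (a = 1 ∧ b = 2 ∧ c = 3 ∧ d = 4) := by omega
  exacts [Ideal.subset_span ⟨4, rfl⟩, Ideal.subset_span ⟨3, rfl⟩, Ideal.subset_span ⟨2, rfl⟩,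
    Ideal.subset_span ⟨1, rfl⟩, Ideal.subset_span ⟨0, rfl⟩]

theorem mk_monomial_mem_span_multichains (d : ℕ) (w : PlueckerIdx →₀ ℕ) (hw : w.degree = d) :
    Ideal.Quotient.mk (plueckerIdeal K) (monomial w 1) ∈
      Submodule.span K (Set.range fun u : multichains (Set.univ : Set PlueckerIdx) d =>
        Ideal.Quotient.mk (plueckerIdeal K) (monomial (u : PlueckerIdx →₀ ℕ) 1)) := by
  induction hN : totalSpread w using Nat.strong_induction_on generalizing w with
  | _ N ih =>
  by_cases hchain : IsChain (· ≤ ·) (w.support : Set PlueckerIdx)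
  · exact Submodule.subset_span ⟨⟨w, hchain, hw, Set.subset_univ _⟩, rfl⟩
  obtain ⟨a, b, c, d, hab, hbc, hcd, had, hbc'⟩ := exists_crossing_of_not_isChain hchain
  obtain ⟨u, rfl⟩ := exists_add_single_one_add_single_one_eq
    (by simp [Subtype.ext_iff, hab.ne]) had hbc'
  have hstraighten : Ideal.Quotient.mk (plueckerIdeal K)
      (monomial (u + single ⟨(a, d), hab.trans (hbc.trans hcd)⟩ 1 + single ⟨(b, c), hbc⟩ 1) 1) =
      Ideal.Quotient.mk (plueckerIdeal K) (monomial
        (u + single ⟨(a, c), hab.trans hbc⟩ 1 + single ⟨(b, d), hbc.trans hcd⟩ 1) 1) -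
      Ideal.Quotient.mk (plueckerIdeal K) (monomial
        (u + single ⟨(a, b), hab⟩ 1 + single ⟨(c, d), hcd⟩ 1) 1) := by
    rw [← map_sub, Ideal.Quotient.eq]
    convert Ideal.mul_mem_left _ (monomial u 1)
      (plueckerRelation_mem_plueckerIdeal K hab hbc hcd) using 1
    simp only [monomial_add_single, pow_one, xv]
    ring
  obtain ⟨hlt₁, hlt₂⟩ := spread_lt_of_crossing hab hbc hcd
  rw [hstraighten]
  refine sub_mem (ih _ ?_ _ ?_ rfl) (ih _ ?_ _ ?_ rfl) <;>
    simp only [← hw, ← hN, totalSpread, map_add, degree_single, linearCombination_single,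
      smul_eq_mul, one_mul] <;>
    omega

end Straightening

section Dimension

variable (K : Type*) [Field K]

theorem map_homogeneousSubmodule_eq_span (d : ℕ) :
    (homogeneousSubmodule PlueckerIdx K d).map
        (Ideal.Quotient.mkₐ K (plueckerIdeal K)).toLinearMap =
      Submodule.span K (Set.range fun u : multichains (Set.univ : Set PlueckerIdx) d =>
        Ideal.Quotient.mk (plueckerIdeal K) (monomial (u : PlueckerIdx →₀ ℕ) 1)) := by
  rw [homogeneousSubmodule_eq_finsupp_supported, AddMonoidAlgebra.supported_eq_span_single,
    Submodule.map_span]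
  refine le_antisymm (Submodule.span_le.mpr ?_) (Submodule.span_mono ?_)
  · rintro _ ⟨_, ⟨w, hw, rfl⟩, rfl⟩
    exact mk_monomial_mem_span_multichains K d w hw
  · rintro _ ⟨u, rfl⟩
    exact ⟨_, ⟨u, u.2.2.1, rfl⟩, rfl⟩

theorem linearIndependent_mk_monomial (d : ℕ) :
    LinearIndependent K fun u : multichains (Set.univ : Set PlueckerIdx) d =>
      Ideal.Quotient.mk (plueckerIdeal K) (monomial (u : PlueckerIdx →₀ ℕ) (1 : K)) :=
  .of_comp (Ideal.Quotient.liftₐ (plueckerIdeal K) minorsHom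
    fun _ h => plueckerIdeal_le_ker_minorsHom K h).toLinearMap
    (linearIndependent_minorsHom_monomial K d)

theorem plueckerDim_eq_card (d : ℕ) :
    plueckerDim K d = Nat.card (multichains (Set.univ : Set PlueckerIdx) d) := by
  have := (multichains_finite (Set.univ : Set PlueckerIdx) d).fintype
  rw [plueckerDim, map_homogeneousSubmodule_eq_span,
    finrank_span_eq_card (linearIndependent_mk_monomial K d), Nat.card_eq_fintype_card]

end Dimension

section Schubert

def schubertDim (p : PlueckerIdx) : ℕ := p.1.1 + p.1.2 - 1

theorem schubertDim_strictMono : StrictMono schubertDim := by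
  rintro ⟨⟨i, j⟩, hij : i < j⟩ ⟨⟨i', j'⟩, hij' : i' < j'⟩ (h : (i, j) < (i', j'))
  simp only [Prod.lt_iff, schubertDim] at h ⊢
  omega

/-- The `h`-polynomial of the Schubert variety `Iic p`: the numerator of its Hilbert series
over `(1 - X) ^ (schubertDim p + 1)`, found by solving the recursion `schubertNumerator_eq`. -/
noncomputable def schubertNumerator (p : PlueckerIdx) : PowerSeries ℤ :=
  match p with
  | ⟨(1, 3), _⟩ => 1 + PowerSeries.X
  | ⟨(1, 4), _⟩ => 1 + 2 * PowerSeries.X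
  | ⟨(2, 3), _⟩ => 1 + PowerSeries.X
  | ⟨(2, 4), _⟩ => 1 + 3 * PowerSeries.X + PowerSeries.X ^ 2
  | ⟨(3, 4), _⟩ => 1 + 3 * PowerSeries.X + PowerSeries.X ^ 2
  | _ => 1

theorem PlueckerIdx.sum_univ {M : Type*} [AddCommMonoid M] (f : PlueckerIdx → M) :
    ∑ p, f p = f ⟨(0, 1), by decide⟩ + f ⟨(0, 2), by decide⟩ + f ⟨(0, 3), by decide⟩ +
      f ⟨(0, 4), by decide⟩ + f ⟨(1, 2), by decide⟩ + f ⟨(1, 3), by decide⟩ +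
      f ⟨(1, 4), by decide⟩ + f ⟨(2, 3), by decide⟩ + f ⟨(2, 4), by decide⟩ +
      f ⟨(3, 4), by decide⟩ := by
  rw [show (Finset.univ : Finset PlueckerIdx) = {⟨(0, 1), by decide⟩, ⟨(0, 2), by decide⟩,
    ⟨(0, 3), by decide⟩, ⟨(0, 4), by decide⟩, ⟨(1, 2), by decide⟩, ⟨(1, 3), by decide⟩,
    ⟨(1, 4), by decide⟩, ⟨(2, 3), by decide⟩, ⟨(2, 4), by decide⟩, ⟨(3, 4), by decide⟩} by decide]
  simp [add_assoc]

theorem schubertNumerator_eq (p : PlueckerIdx) :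
    schubertNumerator p = (1 - PowerSeries.X) ^ schubertDim p + PowerSeries.X *
      ∑ q ∈ Finset.Iio p, (1 - PowerSeries.X) ^ (schubertDim p - schubertDim q - 1) *
        schubertNumerator q := by
  classical
  rw [← Finset.filter_gt_eq_Iio, Finset.sum_filter, PlueckerIdx.sum_univ]
  rcases p with ⟨⟨i, j⟩, hij⟩
  fin_cases i <;> fin_cases j <;> simp [Prod.lt_iff, schubertDim, schubertNumerator] at hij ⊢ <;>
    ring

end Schubert

theorem stmt3 :
    (PowerSeries.mk fun n => (plueckerDim k n : ℤ)) * (1 - PowerSeries.X) ^ 10 =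
      1 - 5 * PowerSeries.X ^ 2 + 5 * PowerSeries.X ^ 3 - PowerSeries.X ^ 5 := by
  let top : PlueckerIdx := ⟨(3, 4), by decide⟩
  have htop : Set.Iic top = Set.univ :=
    Set.eq_univ_of_forall fun ⟨⟨i, j⟩, (hij : i < j)⟩ =>
      show (i, j) ≤ (3, 4) from Prod.mk_le_mk.mpr ⟨by omega, by omega⟩
  have hseries : PowerSeries.mk (fun n => (plueckerDim k n : ℤ)) = chainSeries (Set.Iic top) := by
    ext n
    rw [PowerSeries.coeff_mk, plueckerDim_eq_card, ← htop, chainSeries, PowerSeries.coeff_mk]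
  have h : (1 - PowerSeries.X) ^ 7 * chainSeries (Set.Iic top) =
      1 + 3 * PowerSeries.X + PowerSeries.X ^ 2 :=
    one_sub_X_pow_mul_chainSeries_Iic schubertDim schubertDim_strictMono schubertNumerator
      schubertNumerator_eq top
  rw [hseries]
  linear_combination (1 - PowerSeries.X) ^ 3 * h
end
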